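/- Let p: ℝ → ℝ be smooth and 2π-periodic. Then for every σ ∈ ℝ, lim_{a→0⁺} 𝓘₂(σ, a)/a = d · (p'(σ + π/2) + p'(σ + 3π/2)), where d := −4∫₀^{+∞} t²/(1 + t²)^{5/2} dt. -/

import Mathlib

open Real Set Filter Topology MeasureTheory intervalIntegral

/-- 𝓘₂(σ,a). -/
noncomputable def I2 (p : ℝ → ℝ) (σ a : ℝ) : ℝ :=
  ∫ α in (0:ℝ)..(2 * π), p (α + σ) *
    (2 * Real.sin α * Real.cos α) *
    ((a ^ 2)⁻¹ * Real.cos α ^ 2 + a ^ 2 * Real.sin α ^ 2) ^ (-(5:ℝ) / 2)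

/-- The constant d = -4∫₀^∞ t²/(1+t²)^{5/2} dt. -/
noncomputable def dConst : ℝ :=
  -4 * ∫ t in Ioi (0:ℝ), t ^ 2 / (1 + t ^ 2) ^ ((5:ℝ) / 2)

/-- Concentrating kernel. -/
noncomputable def Kker (ε α : ℝ) : ℝ :=
  ε ^ 2 * (Real.cos α ^ 2 + ε ^ 2 * Real.sin α ^ 2) ^ (-(3:ℝ) / 2)

/-- Weight after substitution. -/
noncomputable def Wker (ε t : ℝ) : ℝ :=
  (1 + ε ^ 2 * t ^ 2) ^ ((1:ℝ) / 2) * (1 + t ^ 2) ^ (-(3:ℝ) / 2)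

lemma base_pos (t : ℝ) : (0:ℝ) < 1 + t ^ 2 := by positivity

lemma integrable_W0 : Integrable (fun t : ℝ => (1 + t ^ 2) ^ (-(3:ℝ) / 2)) := by
  apply integrable_inv_one_add_sq.mono
  · apply Continuous.aestronglyMeasurable
    apply Continuous.rpow_const (by continuity)
    intro t; exact Or.inl (base_pos t).ne'
  · filter_upwards with t
    rw [norm_of_nonneg (Real.rpow_nonneg (base_pos t).le _),
      norm_of_nonneg (by positivity)]
    rw [show ((1:ℝ) + t ^ 2)⁻¹ = (1 + t ^ 2) ^ (-1:ℝ) by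
      rw [Real.rpow_neg_one]]
    exact Real.rpow_le_rpow_of_exponent_le (by nlinarith [sq_nonneg t]) (by norm_num)

lemma tendsto_one_sub_inv : Tendsto (fun t : ℝ => 1 - (1 + t ^ 2)⁻¹) atTop (𝓝 1) := by
  have h : Tendsto (fun t : ℝ => 1 + t ^ 2) atTop atTop :=
    tendsto_atTop_add_const_left _ _ (tendsto_pow_atTop two_ne_zero)
  simpa using (tendsto_const_nhds (x := (1:ℝ))).sub h.inv_tendsto_atTop

lemma sq_rpow_half {t : ℝ} (ht : 0 ≤ t) : (t ^ 2) ^ ((1:ℝ)/2) = t := by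
  rw [← Real.rpow_natCast t 2, ← Real.rpow_mul ht,
    show ((2:ℕ):ℝ) * ((1:ℝ)/2) = 1 by push_cast; ring, Real.rpow_one]

lemma integral_W0_Ioi : (∫ t in Ioi (0:ℝ), (1 + t ^ 2) ^ (-(3:ℝ) / 2)) = 1 := by
  have key : ∫ t in Ioi (0:ℝ), (1 + t ^ 2) ^ (-(3:ℝ) / 2)
      = 1 - (0 : ℝ) * (1 + 0 ^ 2) ^ (-(1:ℝ)/2) := by
    apply integral_Ioi_of_hasDerivAt_of_nonneg (g := fun t : ℝ => t * (1 + t ^ 2) ^ (-(1:ℝ)/2))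
    · apply Continuous.continuousWithinAt
      apply Continuous.mul continuous_id
      apply Continuous.rpow_const (by continuity)
      intro t; exact Or.inl (base_pos t).ne'
    · intro t ht
      have h1 : HasDerivAt (fun t : ℝ => 1 + t ^ 2) (2 * t) t := by
        simpa using (hasDerivAt_pow 2 t).const_add 1
      have h2 : HasDerivAt (fun t : ℝ => (1 + t ^ 2) ^ (-(1:ℝ)/2))
          ((-(1:ℝ)/2) * (1 + t ^ 2) ^ ((-(1:ℝ)/2) - 1) * (2 * t)) t :=
        by have := (Real.hasDerivAt_rpow_const (x := 1 + t ^ 2) (p := -(1:ℝ)/2) (Or.inl (base_pos t).ne')).comp t h1; exact this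
      have h3 := (hasDerivAt_id t).mul h2
      refine h3.congr_deriv (Eq.symm ?_)
      have e1 : ((-(1:ℝ)/2) - 1) = (-(3:ℝ)/2) := by norm_num
      rw [e1]
      have e2 : ((1:ℝ) + t ^ 2) ^ (-(1:ℝ)/2)
          = (1 + t ^ 2) * (1 + t ^ 2) ^ (-(3:ℝ)/2) := by
        rw [show (-(1:ℝ)/2) = 1 + (-(3:ℝ)/2) by norm_num, Real.rpow_add (base_pos t),
          Real.rpow_one]
      rw [e2]; simp only [id_eq]; ring
    · intro t ht; positivity
    · have : ∀ᶠ t : ℝ in atTop, (1 - (1 + t ^ 2)⁻¹) ^ ((1:ℝ)/2)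
          = t * (1 + t ^ 2) ^ (-(1:ℝ)/2) := by
        filter_upwards [eventually_gt_atTop (0:ℝ)] with t ht
        have hb := base_pos t
        have e : 1 - (1 + t ^ 2)⁻¹ = t ^ 2 / (1 + t ^ 2) := by field_simp; ring
        rw [e, Real.div_rpow (by positivity) hb.le, sq_rpow_half ht.le,
          show (-(1:ℝ)/2) = -((1:ℝ)/2) by norm_num, Real.rpow_neg hb.le, div_eq_mul_inv]
      have h0 : Tendsto (fun t : ℝ => (1 - (1 + t ^ 2)⁻¹) ^ ((1:ℝ)/2)) atTop (𝓝 1) := by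
        have := (Real.continuousAt_rpow_const 1 ((1:ℝ)/2) (Or.inl one_ne_zero)).tendsto.comp
          tendsto_one_sub_inv
        simpa [Function.comp_def] using this
      exact h0.congr' this
  simpa using key

lemma integral_W0 : (∫ t : ℝ, (1 + t ^ 2) ^ (-(3:ℝ) / 2)) = 2 := by
  have fe : ∀ t : ℝ, ((1:ℝ) + (-t) ^ 2) ^ (-(3:ℝ)/2) = (1 + t ^ 2) ^ (-(3:ℝ)/2) := by
    intro t; rw [neg_pow]; norm_num
  have hIic : (∫ t in Iic (0:ℝ), (1 + t ^ 2) ^ (-(3:ℝ) / 2)) = 1 := by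
    rw [← (by norm_num : -(0:ℝ) = 0), ← integral_comp_neg_Ioi]
    simp_rw [fe]
    exact integral_W0_Ioi
  rw [← integral_Iic_add_Ioi (b := (0:ℝ))
    integrable_W0.integrableOn integrable_W0.integrableOn, hIic, integral_W0_Ioi]
  norm_num

lemma sq_rpow_3half {t : ℝ} (ht : 0 ≤ t) : (t ^ 2) ^ ((3:ℝ)/2) = t ^ 3 := by
  rw [← Real.rpow_natCast t 2, ← Real.rpow_mul ht,
    show ((2:ℕ):ℝ) * ((3:ℝ)/2) = ((3:ℕ):ℝ) by push_cast; ring, Real.rpow_natCast]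

lemma dConst_eq : dConst = -4 / 3 := by
  have key : ∫ t in Ioi (0:ℝ), t ^ 2 / (1 + t ^ 2) ^ ((5:ℝ)/2)
      = 1/3 - (0:ℝ) ^ 3 * (1 + (0:ℝ) ^ 2) ^ (-(3:ℝ)/2) / 3 := by
    apply integral_Ioi_of_hasDerivAt_of_nonneg
      (g := fun t : ℝ => t ^ 3 * (1 + t ^ 2) ^ (-(3:ℝ)/2) / 3)
    · apply Continuous.continuousWithinAt
      apply Continuous.div_const
      apply Continuous.mul (continuous_pow 3)
      apply Continuous.rpow_const (by continuity)
      intro t; exact Or.inl (base_pos t).ne'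
    · intro t ht
      have hb := base_pos t
      have h1 : HasDerivAt (fun t : ℝ => 1 + t ^ 2) (2 * t) t := by
        simpa using (hasDerivAt_pow 2 t).const_add 1
      have h2 : HasDerivAt (fun t : ℝ => (1 + t ^ 2) ^ (-(3:ℝ)/2))
          ((-(3:ℝ)/2) * (1 + t ^ 2) ^ ((-(3:ℝ)/2) - 1) * (2 * t)) t :=
        by have := (Real.hasDerivAt_rpow_const (x := 1 + t ^ 2) (p := -(3:ℝ)/2) (Or.inl hb.ne')).comp t h1; exact this
      have h3 := ((hasDerivAt_pow 3 t).mul h2).div_const 3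
      refine h3.congr_deriv (Eq.symm ?_)
      have e1 : ((-(3:ℝ)/2) - 1) = (-(5:ℝ)/2) := by norm_num
      rw [e1]
      have e2 : ((1:ℝ) + t ^ 2) ^ (-(3:ℝ)/2)
          = (1 + t ^ 2) * (1 + t ^ 2) ^ (-(5:ℝ)/2) := by
        rw [show (-(3:ℝ)/2) = 1 + (-(5:ℝ)/2) by norm_num, Real.rpow_add hb, Real.rpow_one]
      have e3 : ((1:ℝ) + t ^ 2) ^ ((5:ℝ)/2) = ((1 + t ^ 2) ^ (-(5:ℝ)/2))⁻¹ := by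
        rw [show (-(5:ℝ)/2) = -((5:ℝ)/2) by norm_num, Real.rpow_neg hb.le, inv_inv]
      rw [e2, e3, div_eq_mul_inv, inv_inv]
      push_cast
      ring
    · intro t ht; positivity
    · have : ∀ᶠ t : ℝ in atTop, (1 - (1 + t ^ 2)⁻¹) ^ ((3:ℝ)/2) / 3
          = t ^ 3 * (1 + t ^ 2) ^ (-(3:ℝ)/2) / 3 := by
        filter_upwards [eventually_gt_atTop (0:ℝ)] with t ht
        have hb := base_pos t
        have e : 1 - (1 + t ^ 2)⁻¹ = t ^ 2 / (1 + t ^ 2) := by field_simp; ring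
        rw [e, Real.div_rpow (by positivity) hb.le, sq_rpow_3half ht.le,
          show (-(3:ℝ)/2) = -((3:ℝ)/2) by norm_num, Real.rpow_neg hb.le, div_eq_mul_inv]
        ring
      have h0 : Tendsto (fun t : ℝ => (1 - (1 + t ^ 2)⁻¹) ^ ((3:ℝ)/2) / 3) atTop (𝓝 (1/3)) := by
        have := ((Real.continuousAt_rpow_const 1 ((3:ℝ)/2) (Or.inl one_ne_zero)).tendsto.comp
          tendsto_one_sub_inv).div_const 3
        simpa using this
      exact h0.congr' this
  rw [dConst, key]
  norm_num

lemma kker_comp {ε : ℝ} (hε : 0 < ε) (t : ℝ) :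
    (ε / (1 + (ε * t) ^ 2)) * Kker ε (π / 2 - Real.arctan (ε * t)) = Wker ε t := by
  have hB : (0:ℝ) < 1 + ε ^ 2 * t ^ 2 := by positivity
  have hx2 : (ε * t) ^ 2 = ε ^ 2 * t ^ 2 := by ring
  have hs : Real.sqrt (1 + (ε * t) ^ 2) ^ 2 = 1 + ε ^ 2 * t ^ 2 := by
    rw [Real.sq_sqrt (by positivity)]; ring
  have hspos : 0 < Real.sqrt (1 + (ε * t) ^ 2) := Real.sqrt_pos.2 (by positivity)
  have hcos : Real.cos (π / 2 - Real.arctan (ε * t))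
      = (ε * t) / Real.sqrt (1 + (ε * t) ^ 2) := by
    rw [Real.cos_pi_div_two_sub, Real.sin_arctan]
  have hsin : Real.sin (π / 2 - Real.arctan (ε * t))
      = 1 / Real.sqrt (1 + (ε * t) ^ 2) := by
    rw [Real.sin_pi_div_two_sub, Real.cos_arctan]
  have hbase : Real.cos (π / 2 - Real.arctan (ε * t)) ^ 2
      + ε ^ 2 * Real.sin (π / 2 - Real.arctan (ε * t)) ^ 2
      = ε ^ 2 * (1 + t ^ 2) / (1 + ε ^ 2 * t ^ 2) := by
    rw [hcos, hsin, div_pow, div_pow, hs]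
    field_simp
    ring
  unfold Kker Wker
  rw [hbase, Real.div_rpow (by positivity) hB.le,
    Real.mul_rpow (by positivity : (0:ℝ) ≤ ε ^ 2) (by positivity : (0:ℝ) ≤ 1 + t ^ 2)]
  have he3 : (ε ^ 2 : ℝ) ^ (-(3:ℝ)/2) = (ε ^ 3)⁻¹ := by
    rw [← Real.rpow_natCast ε 2, ← Real.rpow_mul hε.le,
      show ((2:ℕ):ℝ) * (-(3:ℝ)/2) = -((3:ℕ):ℝ) by push_cast; ring,
      Real.rpow_neg hε.le, Real.rpow_natCast]
  have hBc : ((1:ℝ) + ε ^ 2 * t ^ 2) ^ (-(3:ℝ)/2)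
      = (1 + ε ^ 2 * t ^ 2) ^ ((1:ℝ)/2) * ((1 + ε ^ 2 * t ^ 2) ^ 2)⁻¹ := by
    rw [← Real.rpow_natCast (1 + ε ^ 2 * t ^ 2) 2, ← Real.rpow_neg hB.le,
      ← Real.rpow_add hB]
    norm_num
  rw [he3, hBc, hx2]
  have h1 : ((1:ℝ) + ε ^ 2 * t ^ 2) ^ ((1:ℝ)/2) ≠ 0 := by positivity
  have hsq : (((1:ℝ) + ε ^ 2 * t ^ 2) ^ ((1:ℝ)/2)) ^ 2 = 1 + ε ^ 2 * t ^ 2 := by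
    rw [← Real.rpow_natCast (((1:ℝ) + ε ^ 2 * t ^ 2) ^ ((1:ℝ)/2)) 2,
      ← Real.rpow_mul hB.le]
    norm_num
  field_simp
  linear_combination (-1:ℝ) * hsq

lemma hasDerivAt_sub_arctan {ε : ℝ} (t : ℝ) :
    HasDerivAt (fun t : ℝ => π / 2 - Real.arctan (ε * t))
      (-(ε / (1 + (ε * t) ^ 2))) t := by
  have h1 : HasDerivAt (fun t : ℝ => ε * t) ε t := by
    simpa using (hasDerivAt_id t).const_mul ε
  have h2 := (Real.hasDerivAt_arctan (ε * t)).comp t h1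
  have h3 := h2.const_sub (π / 2)
  refine h3.congr_deriv (Eq.symm ?_)
  field_simp

lemma range_sub_arctan {ε : ℝ} (hε : 0 < ε) :
    (fun t : ℝ => π / 2 - Real.arctan (ε * t)) '' univ = Ioo 0 π := by
  rw [image_univ]
  have h1 : range (fun t : ℝ => π / 2 - Real.arctan (ε * t))
      = (fun y => π / 2 - y) '' range (fun t : ℝ => Real.arctan (ε * t)) := by
    rw [← range_comp]; rfl
  have h2 : range (fun t : ℝ => Real.arctan (ε * t)) = Ioo (-(π/2)) (π/2) := by
    rw [show (fun t : ℝ => Real.arctan (ε * t)) = Real.arctan ∘ (fun t : ℝ => ε * t) from rfl,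
      range_comp, range_eq_univ.mpr (mul_left_surjective₀ hε.ne'), image_univ,
      Real.range_arctan]
  rw [h1, h2, Set.image_const_sub_Ioo]
  norm_num

lemma sub_lemma {ε : ℝ} (hε : 0 < ε) (q : ℝ → ℝ) :
    (∫ α in (0:ℝ)..π, q α * Kker ε α)
      = ∫ t : ℝ, q (π / 2 - Real.arctan (ε * t)) * Wker ε t := by
  have hinj : Function.Injective (fun t : ℝ => π / 2 - Real.arctan (ε * t)) := by
    have : StrictAnti (fun t : ℝ => π / 2 - Real.arctan (ε * t)) := by
      intro a b hab
      exact sub_lt_sub_left (Real.arctan_strictMono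
        (mul_lt_mul_of_pos_left hab hε)) _
    exact this.injective
  have key := MeasureTheory.integral_image_eq_integral_abs_deriv_smul
    (MeasurableSet.univ) (fun t _ => (hasDerivAt_sub_arctan t).hasDerivWithinAt)
    (hinj.injOn) (fun α => q α * Kker ε α)
  rw [range_sub_arctan hε] at key
  rw [intervalIntegral.integral_of_le Real.pi_pos.le,
    MeasureTheory.integral_Ioc_eq_integral_Ioo, key, MeasureTheory.setIntegral_univ]
  congr 1
  funext t
  rw [smul_eq_mul, abs_neg, abs_of_nonneg (by positivity : (0:ℝ) ≤ ε / (1 + (ε * t) ^ 2))]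
  rw [← kker_comp hε t]
  ring

lemma Wker_continuous_eps (t : ℝ) :
    Continuous (fun ε : ℝ => Wker ε t) := by
  apply Continuous.mul _ continuous_const
  apply Continuous.rpow_const (by continuity)
  intro ε
  exact Or.inl (by positivity)

lemma Wker_nonneg (ε t : ℝ) : 0 ≤ Wker ε t := by
  unfold Wker
  have h1 : (0:ℝ) < 1 + ε ^ 2 * t ^ 2 := by positivity
  positivity

lemma Wker_le {ε t : ℝ} (hε : ε ^ 2 ≤ 1) : Wker ε t ≤ (1 + t ^ 2)⁻¹ := by
  unfold Wker
  have hb := base_pos t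
  have h2 : ((1:ℝ) + t ^ 2) ^ ((1:ℝ)/2) * (1 + t ^ 2) ^ (-(3:ℝ)/2) = (1 + t ^ 2)⁻¹ := by
    rw [← Real.rpow_add hb]
    norm_num
    rw [show (-1:ℝ) = -(1:ℝ) from rfl, Real.rpow_neg hb.le, Real.rpow_one]
  rw [← h2]
  apply mul_le_mul_of_nonneg_right _ (by positivity)
  apply Real.rpow_le_rpow (by positivity) _ (by norm_num)
  nlinarith [sq_nonneg t, sq_nonneg ε]

lemma dct_lemma (q : ℝ → ℝ) (hq : Continuous q) (C : ℝ) (hC : ∀ x, |q x| ≤ C) :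
    Tendsto (fun a : ℝ => ∫ α in (0:ℝ)..π, q α * Kker (a ^ 2) α) (𝓝[>] 0)
      (𝓝 (2 * q (π / 2))) := by
  have hC0 : 0 ≤ C := le_trans (abs_nonneg _) (hC 0)
  have hmain : Tendsto
      (fun a : ℝ => ∫ t : ℝ, q (π / 2 - Real.arctan (a ^ 2 * t)) * Wker (a ^ 2) t)
      (𝓝[>] 0) (𝓝 (∫ t : ℝ, q (π / 2) * (1 + t ^ 2) ^ (-(3:ℝ) / 2))) := by
    apply MeasureTheory.tendsto_integral_filter_of_dominated_convergence
      (bound := fun t : ℝ => C * (1 + t ^ 2)⁻¹)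
    · filter_upwards with a
      apply Continuous.aestronglyMeasurable
      apply Continuous.mul
      · exact hq.comp (by continuity)
      · unfold Wker
        apply Continuous.mul <;>
        · apply Continuous.rpow_const (by continuity)
          intro t; exact Or.inl (by positivity)
    · filter_upwards [Ioo_mem_nhdsGT_of_mem (Set.left_mem_Ico.mpr zero_lt_one)]
        with a ha
      filter_upwards with t
      rw [Real.norm_eq_abs, abs_mul, abs_of_nonneg (Wker_nonneg _ _)]
      have h1 : (a ^ 2) ^ 2 ≤ 1 := by
        calc (a ^ 2) ^ 2 = a ^ 4 := by ring
        _ ≤ 1 := pow_le_one₀ ha.1.le ha.2.le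
      exact mul_le_mul (hC _) (Wker_le h1) (Wker_nonneg _ _) hC0
    · exact integrable_inv_one_add_sq.const_mul C
    · filter_upwards with t
      have ha2 : Tendsto (fun a : ℝ => a ^ 2) (𝓝[>] 0) (𝓝 0) := by
        have := ((continuous_pow 2).tendsto (0:ℝ)).mono_left
          (nhdsWithin_le_nhds (s := Ioi (0:ℝ)))
        simpa using this
      have hg : Continuous (fun ε : ℝ => q (π / 2 - Real.arctan (ε * t)) * Wker ε t) := by
        exact (hq.comp (by continuity)).mul (Wker_continuous_eps t)
      have := (hg.tendsto 0).comp ha2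
      simpa [Wker, Real.arctan_zero, Function.comp_def] using this
  have heq : ∀ᶠ a : ℝ in 𝓝[>] 0,
      (∫ t : ℝ, q (π / 2 - Real.arctan (a ^ 2 * t)) * Wker (a ^ 2) t)
        = ∫ α in (0:ℝ)..π, q α * Kker (a ^ 2) α := by
    filter_upwards [self_mem_nhdsWithin] with a ha
    exact (sub_lemma (pow_pos ha 2) q).symm
  have hval : (∫ t : ℝ, q (π / 2) * (1 + t ^ 2) ^ (-(3:ℝ) / 2)) = 2 * q (π / 2) := by
    rw [MeasureTheory.integral_const_mul, integral_W0]
    ring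
  rw [hval] at hmain
  exact hmain.congr' heq

lemma Kker_pos_base {ε : ℝ} (hε : 0 < ε) (α : ℝ) :
    0 < Real.cos α ^ 2 + ε ^ 2 * Real.sin α ^ 2 := by
  rcases eq_or_ne (Real.cos α) 0 with h | h
  · have hs : Real.sin α ^ 2 = 1 := by
      have := Real.sin_sq_add_cos_sq α; nlinarith
    rw [h, hs]; positivity
  · have : 0 < Real.cos α ^ 2 := by positivity
    nlinarith [sq_nonneg (Real.sin α), mul_nonneg (sq_nonneg ε) (sq_nonneg (Real.sin α))]

lemma Kker_continuous {ε : ℝ} (hε : 0 < ε) : Continuous (Kker ε) := by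
  apply Continuous.mul continuous_const
  apply Continuous.rpow_const (by continuity)
  intro α; exact Or.inl (Kker_pos_base hε α).ne'

lemma Kker_add_pi (ε α : ℝ) : Kker ε (α + π) = Kker ε α := by
  unfold Kker
  rw [Real.cos_add_pi, Real.sin_add_pi]
  ring_nf

lemma hasDerivAt_F {a : ℝ} (ha : a ∈ Ioo (0:ℝ) 1) (α : ℝ) :
    HasDerivAt (fun α => (2 * a / (3 * (1 - a ^ 4))) * Kker (a ^ 2) α)
      (2 * Real.sin α * Real.cos α *
        ((a ^ 2)⁻¹ * Real.cos α ^ 2 + a ^ 2 * Real.sin α ^ 2) ^ (-(5:ℝ) / 2)) α := by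
  obtain ⟨ha0, ha1⟩ := ha
  have ha2 : (0:ℝ) < a ^ 2 := by positivity
  have hu : 0 < Real.cos α ^ 2 + (a ^ 2) ^ 2 * Real.sin α ^ 2 := Kker_pos_base ha2 α
  have ha4 : (1:ℝ) - a ^ 4 ≠ 0 := by nlinarith [pow_lt_one₀ ha0.le ha1 (by norm_num : 4 ≠ 0)]
  -- derivative of inner function
  have hin : HasDerivAt (fun α => Real.cos α ^ 2 + (a ^ 2) ^ 2 * Real.sin α ^ 2)
      ((2 * Real.cos α * (-Real.sin α)) + (a ^ 2) ^ 2 * (2 * Real.sin α * Real.cos α)) α := by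
    have h1 : HasDerivAt (fun α => Real.cos α ^ 2) (2 * Real.cos α * (-Real.sin α)) α := by
      simpa using (Real.hasDerivAt_cos α).fun_pow 2
    have h2 : HasDerivAt (fun α => Real.sin α ^ 2) (2 * Real.sin α * Real.cos α) α := by
      simpa using (Real.hasDerivAt_sin α).fun_pow 2
    exact h1.add (h2.const_mul _)
  have hrpow := (Real.hasDerivAt_rpow_const
    (p := (-(3:ℝ)/2)) (Or.inl hu.ne')).comp α hin
  have hF := (hrpow.const_mul ((a ^ 2 : ℝ) ^ 2)).const_mul (2 * a / (3 * (1 - a ^ 4)))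
  refine hF.congr_deriv (Eq.symm ?_)
  · have hb2 : (a ^ 2)⁻¹ * Real.cos α ^ 2 + a ^ 2 * Real.sin α ^ 2
        = (a ^ 2)⁻¹ * (Real.cos α ^ 2 + (a ^ 2) ^ 2 * Real.sin α ^ 2) := by
      field_simp
    rw [hb2, Real.mul_rpow (by positivity) hu.le]
    have hainv : ((a ^ 2)⁻¹ : ℝ) ^ (-(5:ℝ)/2) = a ^ 5 := by
      rw [← Real.rpow_natCast a 2, ← Real.rpow_neg ha0.le, ← Real.rpow_mul ha0.le,
        show -((2:ℕ):ℝ) * (-(5:ℝ)/2) = ((5:ℕ):ℝ) by push_cast; ring, Real.rpow_natCast]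
    rw [hainv, show (-(3:ℝ)/2 - 1) = (-(5:ℝ)/2) by norm_num]
    field_simp
    ring

lemma ibp_lemma (p : ℝ → ℝ) (hp : ContDiff ℝ (⊤ : ℕ∞) p) (hper : ∀ α, p (α + 2 * π) = p α)
    (σ : ℝ) {a : ℝ} (ha : a ∈ Ioo (0:ℝ) 1) :
    I2 p σ a / a = -(2 / (3 * (1 - a ^ 4))) *
      ((∫ α in (0:ℝ)..π, deriv p (α + σ) * Kker (a ^ 2) α)
        + ∫ α in (0:ℝ)..π, deriv p (α + σ + π) * Kker (a ^ 2) α) := by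
  obtain ⟨ha0, ha1⟩ := ha
  have ha2 : (0:ℝ) < a ^ 2 := by positivity
  have hd : Differentiable ℝ p := hp.differentiable (by simp)
  have hdc : Continuous (deriv p) := hp.continuous_deriv (by simp)
  have hKc : Continuous (Kker (a ^ 2)) := Kker_continuous ha2
  -- integration by parts
  have hu : ∀ x ∈ uIcc (0:ℝ) (2 * π), HasDerivAt (fun x => p (x + σ)) (deriv p (x + σ)) x := by
    intro x _
    have h1 := ((hd (x + σ)).hasDerivAt).comp x ((hasDerivAt_id x).add_const σ)
    simpa [Function.comp_def] using h1
  have hv : ∀ x ∈ uIcc (0:ℝ) (2 * π),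
      HasDerivAt (fun α => (2 * a / (3 * (1 - a ^ 4))) * Kker (a ^ 2) α)
        (2 * Real.sin x * Real.cos x *
          ((a ^ 2)⁻¹ * Real.cos x ^ 2 + a ^ 2 * Real.sin x ^ 2) ^ (-(5:ℝ) / 2)) x :=
    fun x _ => hasDerivAt_F ⟨ha0, ha1⟩ x
  have hu' : IntervalIntegrable (fun x => deriv p (x + σ)) volume 0 (2 * π) :=
    (hdc.comp (by continuity)).intervalIntegrable _ _
  have hv' : IntervalIntegrable (fun x => 2 * Real.sin x * Real.cos x *
      ((a ^ 2)⁻¹ * Real.cos x ^ 2 + a ^ 2 * Real.sin x ^ 2) ^ (-(5:ℝ) / 2)) volume 0 (2 * π) := by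
    apply Continuous.intervalIntegrable
    apply Continuous.mul (by continuity)
    apply Continuous.rpow_const (by continuity)
    intro x
    left
    have : (a ^ 2)⁻¹ * Real.cos x ^ 2 + a ^ 2 * Real.sin x ^ 2
        = (a ^ 2)⁻¹ * (Real.cos x ^ 2 + (a ^ 2) ^ 2 * Real.sin x ^ 2) := by
      field_simp
    rw [this]
    exact (mul_pos (by positivity) (Kker_pos_base ha2 x)).ne'
  have hibp := intervalIntegral.integral_mul_deriv_eq_deriv_mul hu hv hu' hv'
  have hI2 : I2 p σ a = ∫ x in (0:ℝ)..(2 * π), p (x + σ) *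
      (2 * Real.sin x * Real.cos x *
        ((a ^ 2)⁻¹ * Real.cos x ^ 2 + a ^ 2 * Real.sin x ^ 2) ^ (-(5:ℝ) / 2)) := by
    unfold I2
    congr 1
    funext x
    ring
  -- boundary terms vanish
  have hbd : p (2 * π + σ) * ((2 * a / (3 * (1 - a ^ 4))) * Kker (a ^ 2) (2 * π))
      - p (0 + σ) * ((2 * a / (3 * (1 - a ^ 4))) * Kker (a ^ 2) 0) = 0 := by
    have h1 : p (2 * π + σ) = p (0 + σ) := by
      rw [show 2 * π + σ = σ + 2 * π by ring, hper, zero_add]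
    have h2 : Kker (a ^ 2) (2 * π) = Kker (a ^ 2) 0 := by
      unfold Kker
      rw [Real.cos_two_pi, Real.sin_two_pi, Real.cos_zero, Real.sin_zero]
    rw [h1, h2]
    ring
  rw [hI2, hibp, hbd, zero_sub]
  -- pull out the constant
  have hpull : (∫ x in (0:ℝ)..(2 * π), deriv p (x + σ) *
      ((2 * a / (3 * (1 - a ^ 4))) * Kker (a ^ 2) x))
      = (2 * a / (3 * (1 - a ^ 4))) * ∫ x in (0:ℝ)..(2 * π), deriv p (x + σ) * Kker (a ^ 2) x := by
    rw [← intervalIntegral.integral_const_mul]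
    congr 1; funext x; ring
  rw [hpull]
  -- split and translate
  have hint1 : IntervalIntegrable (fun x => deriv p (x + σ) * Kker (a ^ 2) x) volume 0 π :=
    ((hdc.comp (by continuity)).mul hKc).intervalIntegrable _ _
  have hint2 : IntervalIntegrable (fun x => deriv p (x + σ) * Kker (a ^ 2) x) volume π (2 * π) :=
    ((hdc.comp (by continuity)).mul hKc).intervalIntegrable _ _
  have hsplit : (∫ x in (0:ℝ)..(2 * π), deriv p (x + σ) * Kker (a ^ 2) x)
      = (∫ x in (0:ℝ)..π, deriv p (x + σ) * Kker (a ^ 2) x)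
        + ∫ x in π..(2 * π), deriv p (x + σ) * Kker (a ^ 2) x :=
    (intervalIntegral.integral_add_adjacent_intervals hint1 hint2).symm
  have htrans : (∫ x in π..(2 * π), deriv p (x + σ) * Kker (a ^ 2) x)
      = ∫ x in (0:ℝ)..π, deriv p (x + σ + π) * Kker (a ^ 2) x := by
    have := intervalIntegral.integral_comp_add_right (a := (0:ℝ)) (b := π)
      (fun x => deriv p (x + σ) * Kker (a ^ 2) x) π
    rw [zero_add, show π + π = 2 * π by ring] at this
    rw [← this]
    congr 1
    funext x
    rw [Kker_add_pi, show x + π + σ = x + σ + π by ring]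
  rw [hsplit, htrans]
  have hne : (3:ℝ) * (1 - a ^ 4) ≠ 0 := by
    have : a ^ 4 < 1 := pow_lt_one₀ ha0.le ha1 (by norm_num)
    nlinarith
  field_simp

/-- The limit of 𝓘₂(σ,a)/a as a → 0⁺. -/
theorem limit_I2_div_a_at_zero
    (p : ℝ → ℝ) (hp : ContDiff ℝ (⊤ : ℕ∞) p) (hper : ∀ α, p (α + 2 * π) = p α) :
    ∀ σ : ℝ,
      Tendsto (fun a : ℝ => I2 p σ a / a) (𝓝[>] 0)
        (𝓝 (dConst * (deriv p (σ + π / 2) + deriv p (σ + 3 * π / 2)))) := by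
  intro σ
  have hdc : Continuous (deriv p) := hp.continuous_deriv (by simp)
  -- bound on deriv p
  have hperiodic : Function.Periodic (deriv p) (2 * π) := by
    intro x
    rw [← deriv_comp_add_const (f := p) (a := 2 * π) (x := x)]
    congr 1
    funext y
    exact hper y
  obtain ⟨C, hC⟩ := isBounded_iff_forall_norm_le.1
    (hperiodic.isBounded_of_continuous (by positivity : (2:ℝ) * π ≠ 0) hdc)
  have hC1 : ∀ x : ℝ, |deriv p (x + σ)| ≤ C := fun x => hC _ (mem_range_self _)
  have hC2 : ∀ x : ℝ, |deriv p (x + σ + π)| ≤ C := fun x => hC _ (mem_range_self _)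
  -- the two convergent integrals
  have hJ1 := dct_lemma (fun α => deriv p (α + σ)) (hdc.comp (by continuity)) C hC1
  have hJ2 := dct_lemma (fun α => deriv p (α + σ + π)) (hdc.comp (by continuity)) C hC2
  -- the coefficient tendsto
  have hcoef : Tendsto (fun a : ℝ => -(2 / (3 * (1 - a ^ 4)))) (𝓝[>] (0:ℝ))
      (𝓝 (-(2 / 3))) := by
    have h1 : Tendsto (fun a : ℝ => 3 * (1 - a ^ 4)) (𝓝 0) (𝓝 3) := by
      have := Continuous.tendsto (by continuity : Continuous fun a : ℝ => 3 * (1 - a ^ 4)) 0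
      simpa using this
    have h2 := ((tendsto_const_nhds (x := (2:ℝ))).div h1 (by norm_num)).neg
    exact h2.mono_left nhdsWithin_le_nhds
  have hmain := hcoef.mul (hJ1.add hJ2)
  have heq : ∀ᶠ a : ℝ in 𝓝[>] (0:ℝ),
      -(2 / (3 * (1 - a ^ 4))) *
        ((∫ α in (0:ℝ)..π, deriv p (α + σ) * Kker (a ^ 2) α)
          + ∫ α in (0:ℝ)..π, deriv p (α + σ + π) * Kker (a ^ 2) α)
        = I2 p σ a / a := by
    filter_upwards [Ioo_mem_nhdsGT_of_mem (Set.left_mem_Ico.mpr zero_lt_one)] with a ha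
    exact (ibp_lemma p hp hper σ ha).symm
  have hval : -(2 / 3) * (2 * deriv p (π / 2 + σ) + 2 * deriv p (π / 2 + σ + π))
      = dConst * (deriv p (σ + π / 2) + deriv p (σ + 3 * π / 2)) := by
    rw [dConst_eq, show π / 2 + σ = σ + π / 2 by ring,
      show σ + π / 2 + π = σ + 3 * π / 2 by ring]
    ring
  rw [hval] at hmain
  exact hmain.congr' heq
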